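/- Let m ≥ 1 and let A, B : {1, …, m} → {0,1} be bit-strings. Define the polygonal curve α in ℝ² with 4m vertices as follows: for each i ∈ {1, …, m}, if A[i] = 0 then (v^α_{4i−3}, v^α_{4i−2}, v^α_{4i−1}, v^α_{4i}) := ((4i,0), (4i,0), (4i+4,0), (4i+4,0)), and if A[i] = 1 then ((4i,0), (4i,1), (4i+4,1), (4i+4,0)). Define β analogously from B except that when B[i] = 1 the middle vertices have second coordinate −1, i.e., ((4i,0), (4i,−1), (4i+4,−1), (4i+4,0)). If for every i ∈ {1, …, m} at least one of A[i] = 0 or B[i] = 0 holds, then d_F(α, β) < √2. -/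
import Mathlib


/-- The (continuous) Fréchet distance between two curves, restricted to the parameter
interval `[0,1]`: the infimum over reparameterizations `h` (continuous bijections of `[0,1]`
fixing the endpoints) of the supremum over `t ∈ [0,1]` of `dist (τ t) (σ (h t))`. -/
noncomputable def frechetDist {X : Type*} [PseudoMetricSpace X] (τ σ : ℝ → X) : ℝ :=
  sInf {r : ℝ | ∃ h : ℝ → ℝ, ContinuousOn h (Set.Icc 0 1) ∧
    Set.BijOn h (Set.Icc 0 1) (Set.Icc 0 1) ∧ h 0 = 0 ∧ h 1 = 1 ∧
    ∀ t ∈ Set.Icc (0 : ℝ) 1, dist (τ t) (σ (h t)) ≤ r}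

/-- The polygonal curve on `n+1` vertices `v 0, …, v n` with equally spaced instants
`t_j = j/n`: on `[j/n, (j+1)/n]` it linearly interpolates between `v j` and `v (j+1)`. -/
noncomputable def polyline {X : Type*} [AddCommGroup X] [Module ℝ X] :
    {n : ℕ} → (Fin (n + 1) → X) → ℝ → X
  | 0, v, _ => v 0
  | n + 1, v, t =>
    let s : ℝ := t * (n + 1)
    let i : ℕ := ⌊s⌋₊ ⊓ n
    have hi : i ≤ n := min_le_right _ _
    v ⟨i, by omega⟩ + (s - (i : ℝ)) • (v ⟨i + 1, by omega⟩ - v ⟨i, by omega⟩)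

/-- The point `(x, y)` of the Euclidean plane `ℝ²`. -/
noncomputable def pt (x y : ℝ) : EuclideanSpace ℝ (Fin 2) :=
  (WithLp.equiv 2 (Fin 2 → ℝ)).symm ![x, y]

/-- The vertices of the two-dimensional gadget curve for a bit-string `A` of length `m`,
with notches of height `sgn`: the `i`-th bit (0-based) contributes the four vertices
`(4(i+1),0), (4(i+1),0), (4(i+1)+4,0), (4(i+1)+4,0)` (a straight-line gadget) if
`A i = 0 = false`, and `(4(i+1),0), (4(i+1),sgn), (4(i+1)+4,sgn), (4(i+1)+4,0)` (a notch
gadget) if `A i = 1 = true`. Alice's curve uses `sgn = 1`, Bob's uses `sgn = -1`. -/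
noncomputable def notchVerts (m : ℕ) (A : Fin m → Bool) (sgn : ℝ) (j : Fin (4 * m)) :
    EuclideanSpace ℝ (Fin 2) :=
  let i : ℕ := j.1 / 4
  let b : ℝ := 4 * (i + 1)
  let r : ℕ := j.1 % 4
  if A ⟨i, by have := j.isLt; omega⟩ then
    (if r = 0 then pt b 0 else if r = 1 then pt b sgn
      else if r = 2 then pt (b + 4) sgn else pt (b + 4) 0)
  else
    (if r = 0 then pt b 0 else if r = 1 then pt b 0
      else if r = 2 then pt (b + 4) 0 else pt (b + 4) 0)



lemma dist_pt (a b c : ℝ) : dist (pt a b) (pt a c) = |b - c| := by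
  rw [EuclideanSpace.dist_eq]
  simp [pt, Fin.sum_univ_two, Real.dist_eq, Real.sqrt_sq_eq_abs, sq_abs]

lemma polyline_dist_le {X : Type*} [NormedAddCommGroup X] [NormedSpace ℝ X] {n : ℕ}
    (v w : Fin (n + 1) → X) {C : ℝ} (hC : ∀ j, dist (v j) (w j) ≤ C)
    {t : ℝ} (ht : t ∈ Set.Icc (0 : ℝ) 1) :
    dist (polyline v t) (polyline w t) ≤ C := by
  obtain ⟨ht0, ht1⟩ := ht
  cases n with
  | zero => exact hC 0
  | succ k =>
    show dist (_ + _ • _) (_ + _ • _) ≤ C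
    set s : ℝ := t * (k + 1) with hs
    set i : ℕ := ⌊s⌋₊ ⊓ k with hi
    have hile : i ≤ k := min_le_right _ _
    set lam : ℝ := s - (i : ℝ) with hlam
    have hs0 : 0 ≤ s := by positivity
    have hl0 : 0 ≤ lam := by
      have h1 : (i : ℝ) ≤ (⌊s⌋₊ : ℝ) := by exact_mod_cast Nat.cast_le.mpr (min_le_left _ _)
      have h2 : (⌊s⌋₊ : ℝ) ≤ s := Nat.floor_le hs0
      simp [hlam]; linarith
    have hl1 : lam ≤ 1 := by
      rcases le_or_gt (⌊s⌋₊) k with h | h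
      · have : i = ⌊s⌋₊ := min_eq_left h
        have h2 : s < (⌊s⌋₊ : ℝ) + 1 := Nat.lt_floor_add_one s
        rw [hlam, this]; linarith
      · have hik : i = k := min_eq_right (by omega)
        have h2 : s ≤ (k + 1 : ℝ) := by
          rw [hs]; nlinarith
        rw [hlam, hik]; linarith
    have key : (v ⟨i, by omega⟩ + lam • (v ⟨i + 1, by omega⟩ - v ⟨i, by omega⟩))
        - (w ⟨i, by omega⟩ + lam • (w ⟨i + 1, by omega⟩ - w ⟨i, by omega⟩))
        = (1 - lam) • (v ⟨i, by omega⟩ - w ⟨i, by omega⟩)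
          + lam • (v ⟨i + 1, by omega⟩ - w ⟨i + 1, by omega⟩) := by
      module
    rw [dist_eq_norm, key]
    calc ‖_ + _‖ ≤ ‖(1 - lam) • (v ⟨i, by omega⟩ - w ⟨i, by omega⟩)‖
        + ‖lam • (v ⟨i + 1, by omega⟩ - w ⟨i + 1, by omega⟩)‖ := norm_add_le _ _
      _ ≤ (1 - lam) * C + lam * C := by
          gcongr <;> rw [norm_smul]
          · rw [Real.norm_eq_abs, abs_of_nonneg (by linarith)]
            have := hC ⟨i, by omega⟩
            rw [dist_eq_norm] at this
            nlinarith [norm_nonneg (v ⟨i, by omega⟩ - w ⟨i, by omega⟩)]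
          · rw [Real.norm_eq_abs, abs_of_nonneg hl0]
            have := hC ⟨i + 1, by omega⟩
            rw [dist_eq_norm] at this
            nlinarith [norm_nonneg (v ⟨i + 1, by omega⟩ - w ⟨i + 1, by omega⟩)]
      _ = C := by ring

lemma notch_dist_le (m : ℕ) (A B : Fin m → Bool) (hAB : ∀ i, A i = false ∨ B i = false)
    (j : Fin (4 * m)) :
    dist (notchVerts m A 1 j) (notchVerts m B (-1) j) ≤ 1 := by
  unfold notchVerts
  dsimp only
  have hr : j.1 % 4 = 0 ∨ j.1 % 4 = 1 ∨ j.1 % 4 = 2 ∨ j.1 % 4 = 3 := by omega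
  rcases hAB ⟨j.1 / 4, by have := j.isLt; omega⟩ with hA | hB
  · rw [hA]
    rcases eq_or_ne (B ⟨j.1 / 4, by have := j.isLt; omega⟩) true with hB | hB
    · rw [hB]
      rcases hr with h | h | h | h <;> simp [h, dist_pt]
    · rw [Bool.eq_false_iff.mpr hB]
      rcases hr with h | h | h | h <;> simp [h, dist_pt]
  · rw [hB]
    rcases eq_or_ne (A ⟨j.1 / 4, by have := j.isLt; omega⟩) true with hA | hA
    · rw [hA]
      rcases hr with h | h | h | h <;> simp [h, dist_pt]
    · rw [Bool.eq_false_iff.mpr hA]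
      rcases hr with h | h | h | h <;> simp [h, dist_pt]

/-- For bit-strings `A, B` of length `m ≥ 1`, let `α` be the planar gadget
curve of `A` with notches of height `1`, and `β` the planar gadget curve of `B` with notches
of height `-1` (each with `4m` vertices at equally spaced instants). If for every position
`i` at least one of `A i = 0` or `B i = 0` holds, then `d_F(α, β) < √2`. -/
theorem disjointness_gadget_frechet_upper (m : ℕ) (hm : 1 ≤ m) (A B : Fin m → Bool)
    (hAB : ∀ i, A i = false ∨ B i = false) :
    frechetDist
      (polyline (n := 4 * m - 1) (fun j => notchVerts m A 1 (Fin.cast (by omega) j)))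
      (polyline (n := 4 * m - 1) (fun j => notchVerts m B (-1) (Fin.cast (by omega) j)))
      < Real.sqrt 2 := by
  set S := {r : ℝ | ∃ h : ℝ → ℝ, ContinuousOn h (Set.Icc 0 1) ∧
    Set.BijOn h (Set.Icc 0 1) (Set.Icc 0 1) ∧ h 0 = 0 ∧ h 1 = 1 ∧
    ∀ t ∈ Set.Icc (0 : ℝ) 1,
      dist ((polyline (n := 4 * m - 1) (fun j => notchVerts m A 1 (Fin.cast (by omega) j))) t)
        ((polyline (n := 4 * m - 1) (fun j => notchVerts m B (-1) (Fin.cast (by omega) j))) (h t))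
        ≤ r} with hS
  have h1 : (1 : ℝ) ∈ S := by
    refine ⟨id, continuousOn_id, Set.bijOn_id _, rfl, rfl, fun t ht => ?_⟩
    exact polyline_dist_le _ _ (fun j => notch_dist_le m A B hAB _) ht
  have hbd : BddBelow S := by
    refine ⟨0, fun r hr => ?_⟩
    obtain ⟨h, _, _, _, _, hd⟩ := hr
    exact le_trans dist_nonneg (hd 0 (by norm_num))
  have hle : frechetDist _ _ ≤ 1 := csInf_le hbd h1
  have h2 : (1 : ℝ) < Real.sqrt 2 := by
    rw [show (1:ℝ) = Real.sqrt 1 by simp]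
    exact Real.sqrt_lt_sqrt (by norm_num) (by norm_num)
  exact lt_of_le_of_lt hle h2
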